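/- Finite spectral decomposition of norm-continuous representations of compact abelian groups in C*-algebras: let G be a compact abelian topological group, A a unital C*-algebra, and U a norm-continuous representation of G in A. Then there exist finitely many pairwise distinct continuous characters χ₁, …, χ_n : G → 𝕋 and nonzero projections (self-adjoint idempotents) p₁, …, p_n ∈ A with p_i p_j = 0 for i ≠ j and p₁ + ⋯ + p_n = 1, such that U(g) = χ₁(g) p₁ + ⋯ + χ_n(g) p_n for every g ∈ G. -/

import Mathlib

/-!
The closed ⋆-subalgebra `B` of `A` generated by the range of `U` is a commutative C⋆-algebra.
Every character `x` of `B` yields a continuous character `g ↦ x (U g)` of `G`. The resulting map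
from the character space of `B` to the Pontryagin dual of `G` is injective, because the `U g`
generate `B`, and continuous, because characters are uniformly Lipschitz. Its domain is compact
and, `G` being compact, its target is discrete; hence `B` has only finitely many characters.
Gelfand duality then identifies `B` with `ℂ^X` for a finite set `X`; the preimages of the
coordinate idempotents are the projections `p x`, and `U g = ∑ x, x (U g) • p x`.
-/

open Filter Topology WeakDual

section PiSingle

variable {R B ι : Type*} [CommSemiring R] [StarRing R] [Semiring B] [Algebra R B] [StarRing B]
  [DecidableEq ι] (Ψ : B ≃⋆ₐ[R] (ι → R))

theorem StarAlgEquiv.completeOrthogonalIdempotents_symm_single [Fintype ι] :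
    CompleteOrthogonalIdempotents fun i => Ψ.symm (Pi.single i 1) :=
  (CompleteOrthogonalIdempotents.single fun _ => R).map (Ψ.symm : (ι → R) →+* B)

theorem StarAlgEquiv.isSelfAdjoint_symm_single (i : ι) :
    IsSelfAdjoint (Ψ.symm (Pi.single i 1)) :=
  .map (by simp [IsSelfAdjoint]) Ψ.symm

theorem StarAlgEquiv.symm_single_ne_zero [Nontrivial R] (i : ι) : Ψ.symm (Pi.single i 1) ≠ 0 := by
  simp

theorem StarAlgEquiv.sum_smul_symm_single [Fintype ι] (b : B) :
    ∑ i, Ψ b i • Ψ.symm (Pi.single i 1) = b := by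
  have h : ∑ i, Ψ b i • (Pi.single i 1 : ι → R) = Ψ b := by
    ext j
    simp [Pi.single_apply]
  simp only [← map_smul, ← map_sum, h, symm_apply_apply]

end PiSingle

def ContinuousMap.starAlgEquivFnOfDiscrete (X R : Type*) [TopologicalSpace X] [DiscreteTopology X]
    [CommSemiring R] [TopologicalSpace R] [IsTopologicalSemiring R] [StarRing R]
    [ContinuousStar R] : C(X, R) ≃⋆ₐ[R] (X → R) :=
  { ContinuousMap.equivFnOfDiscrete with
    map_mul' _ _ := rfl
    map_add' _ _ := rfl
    map_smul' _ _ := rfl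
    map_star' _ := rfl }

noncomputable def gelfandStarTransformOfFinite (B : Type*) [CommCStarAlgebra B]
    [Finite (characterSpace ℂ B)] : B ≃⋆ₐ[ℂ] (characterSpace ℂ B → ℂ) :=
  (gelfandStarTransform B).trans (ContinuousMap.starAlgEquivFnOfDiscrete _ ℂ)

theorem WeakDual.CharacterSpace.continuous_eval {𝕜 A : Type*} [NontriviallyNormedField 𝕜]
    [NormedRing A] [NormedAlgebra 𝕜 A] [CompleteSpace A] :
    Continuous fun p : characterSpace 𝕜 A × A => p.1 p.2 := by
  refine continuous_iff_continuousAt.2 fun ⟨x, b⟩ => ?_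
  have h_fst : Tendsto (fun p : characterSpace 𝕜 A × A => p.1 b) (𝓝 (x, b)) (𝓝 (x b)) :=
    ((eval_continuous b).comp (continuous_subtype_val.comp continuous_fst)).tendsto _
  have h_snd : Tendsto (fun p : characterSpace 𝕜 A × A => p.1 (p.2 - b)) (𝓝 (x, b)) (𝓝 0) := by
    have h_bound : Continuous fun p : characterSpace 𝕜 A × A => ‖(1 : A)‖ * ‖p.2 - b‖ := by
      fun_prop
    refine squeeze_zero_norm (fun p => ?_) (by simpa using h_bound.tendsto (x, b))
    exact ((toStrongDual (p.1 : WeakDual 𝕜 A)).le_opNorm _).trans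
      (mul_le_mul_of_nonneg_right (norm_le_norm_one p.1) (norm_nonneg _))
  simpa only [ContinuousAt, ← map_add, add_sub_cancel, add_zero] using h_fst.add h_snd

namespace MonoidHom

variable {G A : Type*} [CommGroup G] [CStarAlgebra A] (U : G →* unitary A)

def cstarAlgebra : StarSubalgebra ℂ A :=
  (StarAlgebra.adjoin ℂ (Set.range fun g => (U g : A))).topologicalClosure

instance : IsClosed (U.cstarAlgebra : Set A) :=
  StarSubalgebra.isClosed_topologicalClosure _

open scoped IsMulCommutative in
noncomputable instance : CommRing U.cstarAlgebra :=
  have hcomm (g h : G) : Commute (U g : A) (U h) :=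
    ((Commute.all g h).map U).map (unitary A).subtype
  have : IsMulCommutative (StarAlgebra.adjoin ℂ (Set.range fun g => (U g : A))) := by
    refine StarAlgebra.isMulCommutative_adjoin ℂ ?_ ?_
    · rintro _ ⟨g, rfl⟩ _ ⟨h, rfl⟩
      exact hcomm g h
    · rintro _ ⟨g, rfl⟩ _ ⟨h, rfl⟩
      rw [← Unitary.coe_star, Unitary.star_eq_inv, ← map_inv]
      exact hcomm g h⁻¹
  fast_instance% StarSubalgebra.commRingTopologicalClosure _ mul_comm

noncomputable instance : CommCStarAlgebra U.cstarAlgebra where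

theorem mem_cstarAlgebra (g : G) : (U g : A) ∈ U.cstarAlgebra :=
  StarSubalgebra.le_topologicalClosure _ (StarAlgebra.subset_adjoin ℂ _ ⟨g, rfl⟩)

def toCStarAlgebra : G →* unitary U.cstarAlgebra where
  toFun g := ⟨⟨U g, U.mem_cstarAlgebra g⟩, Unitary.mem_iff.2
    ⟨Subtype.ext (Unitary.coe_star_mul_self _), Subtype.ext (Unitary.coe_mul_star_self _)⟩⟩
  map_one' := by ext; simp
  map_mul' g h := by ext; simp

variable [TopologicalSpace G] {U}

theorem continuous_toCStarAlgebra (hU : Continuous fun g => (U g : A)) :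
    Continuous fun g => (U.toCStarAlgebra g : U.cstarAlgebra) :=
  hU.subtype_mk _

noncomputable def characterSpaceToDual (hU : Continuous fun g => (U g : A)) :
    characterSpace ℂ U.cstarAlgebra → PontryaginDual G := fun x =>
  { toFun g := ⟨x (U.toCStarAlgebra g), mem_sphere_zero_iff_norm.2
      (CStarRing.norm_of_mem_unitary (Unitary.map_mem x (U.toCStarAlgebra g).2))⟩
    map_one' := Circle.ext (by simp)
    map_mul' g h := Circle.ext (by simp; rfl)
    continuous_toFun := ((map_continuous x).comp (continuous_toCStarAlgebra hU)).subtype_mk _ }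

theorem continuous_characterSpaceToDual (hU : Continuous fun g => (U g : A)) :
    Continuous (characterSpaceToDual hU) := by
  refine (ContinuousMonoidHom.isInducing_toContinuousMap G Circle).continuous_iff.2 ?_
  refine ContinuousMap.continuous_of_continuous_uncurry _ ?_
  exact (CharacterSpace.continuous_eval.comp
    (continuous_fst.prodMk ((continuous_toCStarAlgebra hU).comp continuous_snd))).subtype_mk _

theorem injective_characterSpaceToDual (hU : Continuous fun g => (U g : A)) :
    Function.Injective (characterSpaceToDual hU) := by
  intro x y hxy
  refine StarAlgHomClass.ext_topologicalClosure (map_continuous x) (map_continuous y) fun z => ?_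
  let ι := StarSubalgebra.inclusion (StarSubalgebra.le_topologicalClosure
    (StarAlgebra.adjoin ℂ (Set.range fun g => (U g : A))))
  have h := StarAlgHom.ext_adjoin (f := (x : U.cstarAlgebra →⋆ₐ[ℂ] ℂ).comp ι)
    (g := (y : U.cstarAlgebra →⋆ₐ[ℂ] ℂ).comp ι) ?_
  · exact DFunLike.congr_fun h z
  · rintro w ⟨g, hg⟩
    have hw : ι w = (U.toCStarAlgebra g : U.cstarAlgebra) := Subtype.ext hg.symm
    change x (ι w) = y (ι w)
    rw [hw]
    exact congr_arg (fun χ : PontryaginDual G => (χ g : ℂ)) hxy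

theorem finite_characterSpace [CompactSpace G] (hU : Continuous fun g => (U g : A)) :
    Finite (characterSpace ℂ U.cstarAlgebra) :=
  have : Finite (Set.range (characterSpaceToDual hU)) :=
    (isCompact_range (continuous_characterSpaceToDual hU)).finite_of_discrete.to_subtype
  Finite.of_injective_finite_range (injective_characterSpaceToDual hU)

end MonoidHom

theorem finite_spectral_decomposition_cstar
    {G : Type*} [CommGroup G] [TopologicalSpace G] [CompactSpace G]
    {A : Type*} [NormedRing A] [StarRing A] [CStarRing A] [NormedAlgebra ℂ A]
    [CompleteSpace A] [StarModule ℂ A]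
    (U : G →* unitary A) (hU : Continuous fun g : G => (U g : A)) :
    ∃ (n : ℕ) (χ : Fin n → ContinuousMonoidHom G Circle) (p : Fin n → A),
      Function.Injective χ ∧
      (∀ i, p i ≠ 0) ∧
      (∀ i, IsSelfAdjoint (p i)) ∧
      (∀ i, IsIdempotentElem (p i)) ∧
      (∀ i j, i ≠ j → p i * p j = 0) ∧
      (∑ i, p i = 1) ∧
      ∀ g : G, (U g : A) = ∑ i, ((χ i g : ℂ)) • p i := by
  classical
  let _ : CStarAlgebra A := {}
  have := MonoidHom.finite_characterSpace hU
  let _ := Fintype.ofFinite (characterSpace ℂ U.cstarAlgebra)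
  let e := (Fintype.equivFin (characterSpace ℂ U.cstarAlgebra)).symm
  let Ψ := gelfandStarTransformOfFinite U.cstarAlgebra
  let ι : U.cstarAlgebra →⋆ₐ[ℂ] A := U.cstarAlgebra.subtype
  let p i : A := ι (Ψ.symm (Pi.single (e i) 1))
  have hp : CompleteOrthogonalIdempotents p := (CompleteOrthogonalIdempotents.equiv e).2
    (Ψ.completeOrthogonalIdempotents_symm_single.map (ι : U.cstarAlgebra →+* A))
  refine ⟨_, MonoidHom.characterSpaceToDual hU ∘ e, p,
    (MonoidHom.injective_characterSpaceToDual hU).comp e.injective,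
    fun i => (map_ne_zero_iff ι Subtype.val_injective).2 (Ψ.symm_single_ne_zero _),
    fun i => (Ψ.isSelfAdjoint_symm_single _).map ι, hp.idem, fun i j hij => hp.ortho hij,
    hp.complete, fun g => ?_⟩
  calc (U g : A) = ι (U.toCStarAlgebra g) := rfl
    _ = ι (∑ x, Ψ (U.toCStarAlgebra g) x • Ψ.symm (Pi.single x 1)) := by
      rw [Ψ.sum_smul_symm_single]
    _ = _ := by
      rw [map_sum, ← e.sum_comp]
      simp only [map_smul]
      rfl
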